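/- Let L, ν be natural numbers with ν+1 < L, h ∈ ℂ^L, f ∈ ℂ^{ν+1}, N0 > 0, σ ∈ (0,1], and assume F(ω) ≠ 0 for all ω ∈ [−π,π]. Define ε₁ and ε₂ as below and assume ε₂ is negative definite. Let b★ ∈ ℂ^{L−ν−1} be determined by conj(b★) = −ε₂⁻¹·ε₁ (componentwise), let B★(ω) = Σ_{j=0}^{L−ν−2} (b★)_j e^{iω(ν+1+j)}, and let W★(ω) = conj(H(ω))·(1+|F(ω)|² + σ·conj(F(ω))·B★(ω))/(conj(F(ω))·(N0+|H(ω)|²)). Then I_LB(W★,F,B★) = J(F) − ε₁†·ε₂⁻¹·ε₁, where J(F) = 1 + (1/2π)∫_{−π}^{π}[log(1+|F(ω)|²) + M(ω)·(1+|F(ω)|²)] dω; i.e., the upper bound J(F) − ε₁†ε₂⁻¹ε₁ on the mutual-information lower bound is attained by the optimal prefilter and feedback filter of Theorem 1. -/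

import Mathlib

open Complex Real MeasureTheory Matrix
open scoped ComplexOrder

/-- DTFT of the channel taps `h ∈ ℂ^L`. -/
noncomputable def Hdtft {L : ℕ} (h : Fin L → ℂ) (ω : ℝ) : ℂ :=
  ∑ ℓ : Fin L, h ℓ * Complex.exp (Complex.I * (ω : ℂ) * ((ℓ : ℕ) : ℂ))

/-- DTFT of the target-response taps `f ∈ ℂ^{ν+1}`. -/
noncomputable def Fdtft {ν : ℕ} (f : Fin (ν + 1) → ℂ) (ω : ℝ) : ℂ :=
  ∑ k : Fin (ν + 1), f k * Complex.exp (Complex.I * (ω : ℂ) * ((k : ℕ) : ℂ))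

/-- DTFT of the feedback-filter taps `b ∈ ℂ^{L−ν−1}` (supported on taps ν+1,…,L−1). -/
noncomputable def Bdtft {L ν : ℕ} (b : Fin (L - ν - 1) → ℂ) (ω : ℝ) : ℂ :=
  ∑ j : Fin (L - ν - 1), b j * Complex.exp (Complex.I * (ω : ℂ) * ((ν + 1 + (j : ℕ) : ℕ) : ℂ))

/-- The LMMSE kernel `M(ω) = −N0/(N0+|H(ω)|²)`. -/
noncomputable def Mker (N0 : ℝ) (H : ℝ → ℂ) (ω : ℝ) : ℝ :=
  -N0 / (N0 + ‖H ω‖ ^ 2)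

/-- `M̃(ω) = σ²(1+M(ω)) − σ`. -/
noncomputable def Mtker (N0 σ : ℝ) (H : ℝ → ℂ) (ω : ℝ) : ℝ :=
  σ ^ 2 * (1 + Mker N0 H ω) - σ

/-- The exponential vector `φ(ω) = (e^{iω(ν+1)},…,e^{iω(L−1)})ᵀ`. -/
noncomputable def phiVec (L ν : ℕ) (j : Fin (L - ν - 1)) (ω : ℝ) : ℂ :=
  Complex.exp (Complex.I * (ω : ℂ) * ((ν + 1 + (j : ℕ) : ℕ) : ℂ))

/-- The vector `ε₁ = (σ/2π)∫ M conj(F) φ dω`. -/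
noncomputable def eps1 (L ν : ℕ) (N0 σ : ℝ) (H F : ℝ → ℂ) (j : Fin (L - ν - 1)) : ℂ :=
  ((σ / (2 * π) : ℝ) : ℂ) *
    ∫ ω in (-π)..π, ((Mker N0 H ω : ℝ) : ℂ) * (starRingEnd ℂ) (F ω) * phiVec L ν j ω

/-- The matrix `ε₂ = (1/2π)∫ (M̃|F|²/(1+|F|²)) φ φ† dω`. -/
noncomputable def eps2 (L ν : ℕ) (N0 σ : ℝ) (H F : ℝ → ℂ) :
    Matrix (Fin (L - ν - 1)) (Fin (L - ν - 1)) ℂ := fun j k =>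
  ((1 / (2 * π) : ℝ) : ℂ) *
    ∫ ω in (-π)..π,
      ((Mtker N0 σ H ω * ‖F ω‖ ^ 2 / (1 + ‖F ω‖ ^ 2) : ℝ) : ℂ) *
        (phiVec L ν j ω * (starRingEnd ℂ) (phiVec L ν k ω))

/-- The quantity `Λ(ω)` appearing in the MILB. -/
noncomputable def Lam (N0 σ : ℝ) (W H F B : ℝ → ℂ) (ω : ℝ) : ℝ :=
  ‖F ω * W ω‖ ^ 2 * (N0 + ‖H ω‖ ^ 2) +
    σ * ‖F ω * B ω‖ ^ 2 -
    2 * σ * ‖F ω‖ ^ 2 * (H ω * W ω * (starRingEnd ℂ) (B ω)).re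

/-- The mutual-information lower bound functional `I_LB(W,F,B)`. -/
noncomputable def ILB (N0 σ : ℝ) (W H F B : ℝ → ℂ) : ℝ :=
  (1 / (2 * π)) *
      ∫ ω in (-π)..π,
        (Real.log (1 + ‖F ω‖ ^ 2) - ‖F ω‖ ^ 2 -
          Lam N0 σ W H F B ω / (1 + ‖F ω‖ ^ 2)) +
    (1 / π) *
      ∫ ω in (-π)..π, ((starRingEnd ℂ) (F ω) * (W ω * H ω - (σ : ℂ) * B ω)).re

/-- `J(F) = 1 + (1/2π)∫ [log(1+|F|²) + M(1+|F|²)]`. -/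
noncomputable def Jfun (N0 : ℝ) (H F : ℝ → ℂ) : ℝ :=
  1 + (1 / (2 * π)) *
    ∫ ω in (-π)..π,
      (Real.log (1 + ‖F ω‖ ^ 2) + Mker N0 H ω * (1 + ‖F ω‖ ^ 2))


/-- The optimal prefilter `W★` of Theorem 1 (for a given feedback DTFT `B`). -/
noncomputable def Wstar (N0 σ : ℝ) (H F B : ℝ → ℂ) (ω : ℝ) : ℂ :=
  (starRingEnd ℂ) (H ω) *
      (1 + (‖F ω‖ ^ 2 : ℂ) + (σ : ℂ) * (starRingEnd ℂ) (F ω) * B ω) /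
    ((starRingEnd ℂ) (F ω) * ((N0 : ℂ) + (‖H ω‖ ^ 2 : ℂ)))

/-! Substituting `W★` into the integrand of `I_LB` gives, pointwise, the integrand of `J(F)` plus a
part that depends on `B` only through `2σ M Re(F̄ B) + M̃ |F|²/(1+|F|²) |B|²`. Since `B = b ⬝ φ`,
integration turns this part into `2 Re(b ⬝ ε₁) + Re(b ⬝ ε₂ b̄)`, a quadratic function of `b` whose
value at its stationary point `b̄ = -ε₂⁻¹ ε₁` is `-Re(ε₁† ε₂⁻¹ ε₁)`. -/

@[fun_prop]
theorem continuous_Hdtft {L : ℕ} (h : Fin L → ℂ) : Continuous (Hdtft h) := by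
  unfold Hdtft; fun_prop

@[fun_prop]
theorem continuous_Fdtft {ν : ℕ} (f : Fin (ν + 1) → ℂ) : Continuous (Fdtft f) := by
  unfold Fdtft; fun_prop

@[fun_prop]
theorem continuous_Bdtft {L ν : ℕ} (b : Fin (L - ν - 1) → ℂ) :
    Continuous (Bdtft (L := L) (ν := ν) b) := by
  unfold Bdtft; fun_prop

@[fun_prop]
theorem continuous_phiVec (L ν : ℕ) (j : Fin (L - ν - 1)) : Continuous (phiVec L ν j) := by
  unfold phiVec; fun_prop

theorem continuous_Mker {N0 : ℝ} (hN0 : 0 < N0) {H : ℝ → ℂ} (hH : Continuous H) :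
    Continuous (Mker N0 H) := by
  unfold Mker
  exact continuous_const.div (by fun_prop) fun ω => by positivity

theorem continuousOn_Wstar {N0 : ℝ} (hN0 : 0 < N0) (σ : ℝ) {H F B : ℝ → ℂ} (hH : Continuous H)
    (hF : Continuous F) (hB : Continuous B) {s : Set ℝ} (hs : ∀ ω ∈ s, F ω ≠ 0) :
    ContinuousOn (Wstar N0 σ H F B) s := by
  unfold Wstar
  refine ContinuousOn.div (by fun_prop) (by fun_prop) fun ω hω =>
    mul_ne_zero (by simpa using hs ω hω) ?_
  exact_mod_cast (by positivity : N0 + ‖H ω‖ ^ 2 ≠ 0)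

-- Viewing `z` and `conj z` as independent variables, this is an identity of rational functions.
theorem ILB_integrand_Wstar {N0 : ℝ} (hN0 : 0 < N0) (σ : ℝ) (H F B : ℝ → ℂ) {ω : ℝ}
    (hF : F ω ≠ 0) :
    Real.log (1 + ‖F ω‖ ^ 2) - ‖F ω‖ ^ 2 -
        Lam N0 σ (Wstar N0 σ H F B) H F B ω / (1 + ‖F ω‖ ^ 2) +
      2 * ((starRingEnd ℂ) (F ω) * (Wstar N0 σ H F B ω * H ω - σ * B ω)).re =
    Real.log (1 + ‖F ω‖ ^ 2) + Mker N0 H ω * (1 + ‖F ω‖ ^ 2) + 1 +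
      2 * σ * (Mker N0 H ω * ((starRingEnd ℂ) (F ω) * B ω).re) +
      Mtker N0 σ H ω * ‖F ω‖ ^ 2 / (1 + ‖F ω‖ ^ 2) * ‖B ω‖ ^ 2 := by
  have hK : (N0 : ℂ) + (starRingEnd ℂ) (H ω) * H ω ≠ 0 := by
    rw [conj_mul']; exact_mod_cast (by positivity : N0 + ‖H ω‖ ^ 2 ≠ 0)
  have hA : (1 : ℂ) + F ω * (starRingEnd ℂ) (F ω) ≠ 0 := by
    rw [mul_conj']; exact_mod_cast (by positivity : 1 + ‖F ω‖ ^ 2 ≠ 0)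
  have hF' : (starRingEnd ℂ) (F ω) ≠ 0 := by simpa using hF
  apply Complex.ofReal_injective
  simp only [Lam, Mker, Mtker, Wstar]
  push_cast
  simp only [re_eq_add_conj, ← mul_conj', map_mul, map_add, map_sub, map_div₀, map_one,
    conj_ofReal, conj_conj]
  field_simp
  ring

-- In `ILB` the second integral lies inside the scope of the first, as a constant integrand.
theorem ILB_eq_integral {N0 σ : ℝ} {W H F B : ℝ → ℂ}
    (h1 : IntervalIntegrable (fun ω => Real.log (1 + ‖F ω‖ ^ 2) - ‖F ω‖ ^ 2 -
      Lam N0 σ W H F B ω / (1 + ‖F ω‖ ^ 2)) volume (-π) π)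
    (h2 : IntervalIntegrable (fun ω => ((starRingEnd ℂ) (F ω) * (W ω * H ω - σ * B ω)).re)
      volume (-π) π) :
    ILB N0 σ W H F B = 1 / (2 * π) * ∫ ω in (-π)..π,
      (Real.log (1 + ‖F ω‖ ^ 2) - ‖F ω‖ ^ 2 - Lam N0 σ W H F B ω / (1 + ‖F ω‖ ^ 2) +
        2 * ((starRingEnd ℂ) (F ω) * (W ω * H ω - σ * B ω)).re) := by
  rw [ILB, intervalIntegral.integral_add h1 intervalIntegrable_const,
    intervalIntegral.integral_const, intervalIntegral.integral_add h1 (h2.const_mul 2),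
    intervalIntegral.integral_const_mul, smul_eq_mul]
  field_simp
  ring

theorem ILB_Wstar {N0 : ℝ} (hN0 : 0 < N0) (σ : ℝ) {H F B : ℝ → ℂ} (hH : Continuous H)
    (hF : Continuous F) (hB : Continuous B) (hF0 : ∀ ω ∈ Set.Icc (-π) π, F ω ≠ 0) :
    ILB N0 σ (Wstar N0 σ H F B) H F B =
      Jfun N0 H F +
        2 * (σ / (2 * π) * ∫ ω in (-π)..π, Mker N0 H ω * ((starRingEnd ℂ) (F ω) * B ω).re) +
        1 / (2 * π) * ∫ ω in (-π)..π,
          Mtker N0 σ H ω * ‖F ω‖ ^ 2 / (1 + ‖F ω‖ ^ 2) * ‖B ω‖ ^ 2 := by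
  have hs : ∀ ω ∈ Set.uIcc (-π) π, F ω ≠ 0 := by
    rwa [Set.uIcc_of_le (by linarith [pi_pos])]
  have hW := continuousOn_Wstar hN0 σ hH hF hB hs
  have hM := continuous_Mker hN0 hH
  have h1 : IntervalIntegrable (fun ω => Real.log (1 + ‖F ω‖ ^ 2) - ‖F ω‖ ^ 2 -
      Lam N0 σ (Wstar N0 σ H F B) H F B ω / (1 + ‖F ω‖ ^ 2)) volume (-π) π := by
    refine ContinuousOn.intervalIntegrable ?_
    unfold Lam
    fun_prop (disch := intros; positivity)
  have h2 : IntervalIntegrable (fun ω => ((starRingEnd ℂ) (F ω) *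
      (Wstar N0 σ H F B ω * H ω - σ * B ω)).re) volume (-π) π :=
    ContinuousOn.intervalIntegrable (by fun_prop)
  have hJ : IntervalIntegrable (fun ω => Real.log (1 + ‖F ω‖ ^ 2) +
      Mker N0 H ω * (1 + ‖F ω‖ ^ 2)) volume (-π) π := by
    refine Continuous.intervalIntegrable ?_ _ _
    fun_prop (disch := intros; positivity)
  have hC1 : IntervalIntegrable (fun ω => Mker N0 H ω * ((starRingEnd ℂ) (F ω) * B ω).re)
      volume (-π) π :=
    Continuous.intervalIntegrable (by fun_prop) _ _
  have hC2 : IntervalIntegrable (fun ω => Mtker N0 σ H ω * ‖F ω‖ ^ 2 / (1 + ‖F ω‖ ^ 2) *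
      ‖B ω‖ ^ 2) volume (-π) π := by
    refine Continuous.intervalIntegrable ?_ _ _
    unfold Mtker
    fun_prop (disch := intros; positivity)
  rw [ILB_eq_integral h1 h2,
    intervalIntegral.integral_congr fun ω hω => ILB_integrand_Wstar hN0 σ H F B (hs ω hω),
    intervalIntegral.integral_add ((hJ.add intervalIntegrable_const).add (hC1.const_mul _)) hC2,
    intervalIntegral.integral_add (hJ.add intervalIntegrable_const) (hC1.const_mul _),
    intervalIntegral.integral_add hJ intervalIntegrable_const, intervalIntegral.integral_const,
    intervalIntegral.integral_const_mul, Jfun, smul_eq_mul]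
  field_simp
  ring

theorem Bdtft_eq_dotProduct {L ν : ℕ} (b : Fin (L - ν - 1) → ℂ) (ω : ℝ) :
    Bdtft (L := L) (ν := ν) b ω = b ⬝ᵥ fun j => phiVec L ν j ω := rfl

theorem dotProduct_intervalIntegral_mul {𝕜 ι : Type*} [RCLike 𝕜] [Fintype ι] {a b : ℝ}
    (v : ι → 𝕜) {g : ℝ → 𝕜} {φ : ι → ℝ → 𝕜} (hg : Continuous g) (hφ : ∀ i, Continuous (φ i)) :
    (v ⬝ᵥ fun i => ∫ x in a..b, g x * φ i x) = ∫ x in a..b, g x * (v ⬝ᵥ fun i => φ i x) := by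
  simp only [dotProduct, ← intervalIntegral.integral_const_mul, Finset.mul_sum]
  rw [intervalIntegral.integral_finsetSum (f := fun i x => g x * (v i * φ i x))
    fun i _ => ((hg.mul ((hφ i).const_mul (v i))).intervalIntegrable _ _)]
  refine Finset.sum_congr rfl fun i _ => intervalIntegral.integral_congr fun x _ => ?_
  ring

theorem re_intervalIntegral {a b : ℝ} {f : ℝ → ℂ} (hf : IntervalIntegrable f volume a b) :
    (∫ x in a..b, f x).re = ∫ x in a..b, (f x).re :=
  (reCLM.intervalIntegral_comp_comm hf).symm

theorem re_dotProduct_eps1 (L ν : ℕ) (N0 σ : ℝ) {H F : ℝ → ℂ} (hM : Continuous (Mker N0 H))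
    (hF : Continuous F) (b : Fin (L - ν - 1) → ℂ) :
    (b ⬝ᵥ eps1 L ν N0 σ H F).re = σ / (2 * π) *
      ∫ ω in (-π)..π, Mker N0 H ω * ((starRingEnd ℂ) (F ω) * Bdtft (L := L) (ν := ν) b ω).re := by
  have heps1 : eps1 L ν N0 σ H F = ((σ / (2 * π) : ℝ) : ℂ) • fun j => ∫ ω in (-π)..π,
      ((Mker N0 H ω : ℝ) : ℂ) * (starRingEnd ℂ) (F ω) * phiVec L ν j ω := rfl
  rw [heps1, dotProduct_smul, dotProduct_intervalIntegral_mul b (by fun_prop) (continuous_phiVec L ν),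
    smul_eq_mul, re_ofReal_mul]
  simp only [← Bdtft_eq_dotProduct]
  rw [re_intervalIntegral ((by fun_prop : Continuous _).intervalIntegrable _ _)]
  simp only [mul_assoc, re_ofReal_mul]

theorem re_dotProduct_eps2_mulVec_star (L ν : ℕ) (N0 σ : ℝ) {H F : ℝ → ℂ}
    (hM : Continuous (Mker N0 H)) (hF : Continuous F) (b : Fin (L - ν - 1) → ℂ) :
    (b ⬝ᵥ eps2 L ν N0 σ H F *ᵥ star b).re = 1 / (2 * π) *
      ∫ ω in (-π)..π, Mtker N0 σ H ω * ‖F ω‖ ^ 2 / (1 + ‖F ω‖ ^ 2) *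
        ‖Bdtft (L := L) (ν := ν) b ω‖ ^ 2 := by
  set g : ℝ → ℝ := fun ω => Mtker N0 σ H ω * ‖F ω‖ ^ 2 / (1 + ‖F ω‖ ^ 2)
  have hg : Continuous g := by
    unfold g Mtker
    fun_prop (disch := intros; positivity)
  have hrow : eps2 L ν N0 σ H F *ᵥ star b = ((1 / (2 * π) : ℝ) : ℂ) • fun j =>
      ∫ ω in (-π)..π,
        (g ω : ℂ) * (starRingEnd ℂ) (Bdtft (L := L) (ν := ν) b ω) * phiVec L ν j ω := by
    ext j
    have hentry : (fun k => eps2 L ν N0 σ H F j k) = ((1 / (2 * π) : ℝ) : ℂ) • fun k =>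
        ∫ ω in (-π)..π, ((g ω : ℂ) * phiVec L ν j ω) * star (phiVec L ν k ω) := by
      ext k
      simp only [eps2, Pi.smul_apply, smul_eq_mul, mul_assoc]
      rfl
    rw [mulVec, dotProduct_comm, hentry, dotProduct_smul,
      dotProduct_intervalIntegral_mul _ (by fun_prop) fun k => (continuous_phiVec L ν k).star]
    simp only [Pi.smul_apply]
    congr 1
    refine intervalIntegral.integral_congr fun ω _ => ?_
    rw [← Pi.star_def, star_dotProduct_star, dotProduct_comm, ← Bdtft_eq_dotProduct,
      Complex.star_def]
    ring
  rw [hrow, dotProduct_smul,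
    dotProduct_intervalIntegral_mul b (by fun_prop) (continuous_phiVec L ν), smul_eq_mul,
    re_ofReal_mul]
  simp only [← Bdtft_eq_dotProduct, mul_assoc, conj_mul', ← ofReal_pow, ← ofReal_mul,
    intervalIntegral.integral_ofReal, ofReal_re]
  rfl

theorem quadratic_value_of_star_eq_neg_inv_mulVec {n : Type*} [Fintype n] [DecidableEq n]
    (A : Matrix n n ℂ) (v b : n → ℂ) (hb : star b = -(A⁻¹ *ᵥ v)) :
    2 * (b ⬝ᵥ v).re + (b ⬝ᵥ A *ᵥ star b).re = -(star v ⬝ᵥ A⁻¹ *ᵥ v).re := by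
  by_cases hA : IsUnit A.det
  · have hAb : A *ᵥ star b = -v := by
      rw [hb, mulVec_neg, mulVec_mulVec, mul_nonsing_inv A hA, one_mulVec]
    have hv : A⁻¹ *ᵥ v = -star b := by rw [hb, neg_neg]
    rw [hAb, hv, dotProduct_neg, dotProduct_neg, star_dotProduct_star, dotProduct_comm]
    simp only [neg_re, neg_neg, star_def, conj_re]
    ring
  · have hb0 : b = 0 := by
      simpa [nonsing_inv_apply_not_isUnit A hA] using hb
    simp [hb0, nonsing_inv_apply_not_isUnit A hA]

theorem stmt18_general (L ν : ℕ) (h : Fin L → ℂ) (f : Fin (ν + 1) → ℂ)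
    (N0 σ : ℝ) (hN0 : 0 < N0)
    (hF : ∀ ω ∈ Set.Icc (-π) π, Fdtft f ω ≠ 0)
    (bstar : Fin (L - ν - 1) → ℂ)
    (hbstar : ∀ j, (starRingEnd ℂ) (bstar j) =
      -((eps2 L ν N0 σ (Hdtft h) (Fdtft f))⁻¹.mulVec
          (eps1 L ν N0 σ (Hdtft h) (Fdtft f))) j) :
    ILB N0 σ
        (Wstar N0 σ (Hdtft h) (Fdtft f) (Bdtft (L := L) (ν := ν) bstar))
        (Hdtft h) (Fdtft f) (Bdtft (L := L) (ν := ν) bstar) =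
      Jfun N0 (Hdtft h) (Fdtft f) -
        (star (eps1 L ν N0 σ (Hdtft h) (Fdtft f)) ⬝ᵥ
          (eps2 L ν N0 σ (Hdtft h) (Fdtft f))⁻¹.mulVec
            (eps1 L ν N0 σ (Hdtft h) (Fdtft f))).re := by
  have hM := continuous_Mker hN0 (continuous_Hdtft h)
  have hFc := continuous_Fdtft f
  rw [ILB_Wstar hN0 σ (continuous_Hdtft h) hFc (continuous_Bdtft bstar) hF,
    ← re_dotProduct_eps1 L ν N0 σ hM hFc, ← re_dotProduct_eps2_mulVec_star L ν N0 σ hM hFc,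
    add_assoc, quadratic_value_of_star_eq_neg_inv_mulVec _ _ _ (funext hbstar), sub_eq_add_neg]

/-- Attainment part of Theorem 1: the optimal prefilter `W★` together with the
optimal feedback filter `b★` (with `conj(b★) = −ε₂⁻¹ε₁`) achieve the rate
`J(F) − ε₁†ε₂⁻¹ε₁` of equation (27). -/
theorem stmt18 (L ν : ℕ) (hLν : ν + 1 < L) (h : Fin L → ℂ) (f : Fin (ν + 1) → ℂ)
    (N0 σ : ℝ) (hN0 : 0 < N0) (hσ0 : 0 < σ) (hσ1 : σ ≤ 1)
    (hF : ∀ ω ∈ Set.Icc (-π) π, Fdtft f ω ≠ 0)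
    (hNegDef : (-(eps2 L ν N0 σ (Hdtft h) (Fdtft f))).PosDef)
    (bstar : Fin (L - ν - 1) → ℂ)
    (hbstar : ∀ j, (starRingEnd ℂ) (bstar j) =
      -((eps2 L ν N0 σ (Hdtft h) (Fdtft f))⁻¹.mulVec
          (eps1 L ν N0 σ (Hdtft h) (Fdtft f))) j) :
    ILB N0 σ
        (Wstar N0 σ (Hdtft h) (Fdtft f) (Bdtft (L := L) (ν := ν) bstar))
        (Hdtft h) (Fdtft f) (Bdtft (L := L) (ν := ν) bstar) =
      Jfun N0 (Hdtft h) (Fdtft f) -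
        (star (eps1 L ν N0 σ (Hdtft h) (Fdtft f)) ⬝ᵥ
          (eps2 L ν N0 σ (Hdtft h) (Fdtft f))⁻¹.mulVec
            (eps1 L ν N0 σ (Hdtft h) (Fdtft f))).re :=
  stmt18_general L ν h f N0 σ hN0 hF bstar hbstar
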